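/- In the evolution algebra A over ℤ/4ℤ with basis (x_i)_{i≥1} and relations x_i·x_i = 2x_i + x_{i+1}, x_i·x_j = 0 for i ≠ j, the plenary powers of x_1 satisfy x_1^{[n]} = 2x_n + x_{n+1} for all n ≥ 1; in particular x_1^{[n]} ≠ 0 for every n, and the subalgebra of A generated by x_1 equals A. -/

import Mathlib

/-!
The evolution algebra `A` over `R = ℤ/4ℤ` with basis `(x_i)_{i ≥ 1}` indexed by
`ℕ+` (underlying module `ℕ+ →₀ ZMod 4`, `x_i = Finsupp.single i 1`) and
relations `x_i · x_i = 2x_i + x_{i+1}`, `x_i · x_j = 0` for `i ≠ j`;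
concretely `(a · b) = ∑_i a(i) * b(i) • (2 • x_i + x_{i+1})`.
-/
noncomputable def evolMul {R : Type*} [CommRing R] {ι : Type*}
    (Csq : ι → ι →₀ R) (a b : ι →₀ R) : ι →₀ R :=
  a.sum fun i ai => (ai * b i) • Csq i

/-- The squares of the basis elements: `x_i · x_i = 2 • x_i + x_{i+1}`. -/
noncomputable def sqZ4 : ℕ+ → (ℕ+ →₀ ZMod 4) := fun i =>
  (2 : ZMod 4) • Finsupp.single i 1 + Finsupp.single (i + 1) 1

/-- Plenary powers: `plenary mul a n = a^{[n]}` for `n ≥ 1`, defined by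
`a^{[1]} = a · a` and `a^{[n+1]} = a^{[n]} · a^{[n]}`. -/
def plenary {A : Type*} (mul : A → A → A) (a : A) : ℕ → A
  | 0 => a
  | n + 1 => mul (plenary mul a n) (plenary mul a n)

/-!
Since `2 * 2 = 0` in `ℤ/4ℤ` and distinct basis vectors multiply to zero,
`(2x_n + x_{n+1})² = x_{n+1}² = 2x_{n+1} + x_{n+2}`, which gives the formula for the plenary
powers by induction. Conversely `x_{n+1} = x_n² - 2x_n`, so a multiplicatively closed submodule
containing `x_1` contains every basis vector.
-/

section EvolutionAlgebra

variable {R ι : Type*} [CommRing R] (Csq : ι → ι →₀ R)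

theorem evolMul_single_left (i : ι) (r : R) (b : ι →₀ R) :
    evolMul Csq (Finsupp.single i r) b = (r * b i) • Csq i :=
  Finsupp.sum_single_index (by simp)

theorem evolMul_add_left (a a' b : ι →₀ R) :
    evolMul Csq (a + a') b = evolMul Csq a b + evolMul Csq a' b :=
  Finsupp.sum_add_index' (by simp) fun _ _ _ ↦ by rw [add_mul, add_smul]

theorem evolMul_single_self (i : ι) (r : R) :
    evolMul Csq (Finsupp.single i r) (Finsupp.single i r) = (r * r) • Csq i := by
  rw [evolMul_single_left, Finsupp.single_eq_same]

theorem evolMul_self_single_add_single {i j : ι} (hij : i ≠ j) (r s : R) :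
    evolMul Csq (Finsupp.single i r + Finsupp.single j s)
        (Finsupp.single i r + Finsupp.single j s)
      = (r * r) • Csq i + (s * s) • Csq j := by
  simp only [evolMul_add_left, evolMul_single_left, Finsupp.add_apply,
    Finsupp.single_eq_same, Finsupp.single_eq_of_ne hij, Finsupp.single_eq_of_ne hij.symm,
    add_zero, zero_add]

end EvolutionAlgebra

theorem Submodule.eq_top_of_single_one_mem {R ι : Type*} [Semiring R]
    {p : Submodule R (ι →₀ R)} (h : ∀ i, Finsupp.single i (1 : R) ∈ p) : p = ⊤ := by
  rw [eq_top_iff, ← Finsupp.basisSingleOne.span_eq, Submodule.span_le, Finsupp.coe_basisSingleOne]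
  rintro _ ⟨i, rfl⟩
  exact h i

theorem sqZ4_eq (n : ℕ+) :
    sqZ4 n = Finsupp.single n 2 + Finsupp.single (n + 1) 1 := by
  rw [sqZ4, Finsupp.smul_single_one]

theorem evolMul_sqZ4_self (n : ℕ+) : evolMul sqZ4 (sqZ4 n) (sqZ4 n) = sqZ4 (n + 1) := by
  rw [sqZ4_eq n, evolMul_self_single_add_single _ (PNat.lt_add_right n 1).ne]
  simp only [show (2 * 2 : ZMod 4) = 0 by decide, zero_smul, zero_add, one_mul, one_smul]

theorem plenary_single_one (n : ℕ+) :
    plenary (evolMul sqZ4) (Finsupp.single 1 1) n = sqZ4 n := by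
  induction n using PNat.recOn with
  | one => exact (evolMul_single_self sqZ4 1 1).trans (by rw [mul_one, one_smul])
  | succ n ih => exact (congrArg₂ (evolMul sqZ4) ih ih).trans (evolMul_sqZ4_self n)

theorem sqZ4_apply_succ (n : ℕ+) : sqZ4 n (n + 1) = 1 := by
  rw [sqZ4_eq, Finsupp.add_apply, Finsupp.single_eq_of_ne (PNat.lt_add_right n 1).ne.symm,
    Finsupp.single_eq_same, zero_add]

theorem sqZ4_ne_zero (n : ℕ+) : sqZ4 n ≠ 0 := fun h ↦
  absurd (by simpa [h] using sqZ4_apply_succ n : (0 : ZMod 4) = 1) (by decide)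

theorem single_mem_of_mulClosed {p : Submodule (ZMod 4) (ℕ+ →₀ ZMod 4)}
    (h1 : Finsupp.single 1 1 ∈ p)
    (hmul : ∀ a b : ℕ+ →₀ ZMod 4, a ∈ p → b ∈ p → evolMul sqZ4 a b ∈ p) (n : ℕ+) :
    Finsupp.single n 1 ∈ p := by
  induction n using PNat.recOn with
  | one => exact h1
  | succ n ih =>
    have hsq : sqZ4 n ∈ p := by
      simpa [evolMul_single_self] using hmul _ _ ih ih
    have hsucc : Finsupp.single (n + 1) 1 = sqZ4 n - (2 : ZMod 4) • Finsupp.single n 1 := by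
      rw [sqZ4, add_sub_cancel_left]
    exact hsucc ▸ p.sub_mem hsq (p.smul_mem _ ih)

/-- In the evolution algebra over `ℤ/4ℤ` with
`x_i·x_i = 2x_i + x_{i+1}`, the plenary powers of `x_1` satisfy
`x_1^{[n]} = 2x_n + x_{n+1}` for all `n ≥ 1`; in particular `x_1^{[n]} ≠ 0`
for every `n`, and the subalgebra generated by `x_1` (the smallest
mul-closed `R`-submodule containing `x_1`) equals all of `A`. -/
theorem example_Z4_generated_by_x1 :
    (∀ n : ℕ+, plenary (evolMul sqZ4) (Finsupp.single 1 1) (n : ℕ)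
        = (2 : ZMod 4) • Finsupp.single n 1 + Finsupp.single (n + 1) 1) ∧
    (∀ n : ℕ+, plenary (evolMul sqZ4) (Finsupp.single 1 1) (n : ℕ) ≠ 0) ∧
    (∀ p : Submodule (ZMod 4) (ℕ+ →₀ ZMod 4),
        Finsupp.single 1 1 ∈ p →
        (∀ a b : ℕ+ →₀ ZMod 4, a ∈ p → b ∈ p → evolMul sqZ4 a b ∈ p) →
        ∀ z : ℕ+ →₀ ZMod 4, z ∈ p) := by
  refine ⟨plenary_single_one, fun n ↦ plenary_single_one n ▸ sqZ4_ne_zero n, ?_⟩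
  intro p h1 hmul
  exact Submodule.eq_top_iff'.1 <|
    Submodule.eq_top_of_single_one_mem (single_mem_of_mulClosed h1 hmul)
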